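/- Let β > 0 and λ ∈ ℝ with |λ| < 1. Define E^F(n, l) = 2n + |l| + F + λ(l + F) for n ∈ ℕ, l ∈ ℤ, F ∈ {0,1,2}. Then the family over (n, l) ∈ ℕ × ℤ of e^{−β·E⁰(n,l)} − 2·e^{−β·E¹(n,l)} + e^{−β·E²(n,l)} is summable, with sum (1 − e^{−β(1+λ)})/(1 − e^{−β(1−λ)}). -/

import Mathlib

/-- The spectrum `E^F_{nl} = 2n + |l| + F + λ(l + F)` of the modified Hamiltonian
`H_λ` of the complex weak supersymmetric model. -/
def Elevel (lam : ℝ) (F : ℕ) (n : ℕ) (l : ℤ) : ℝ :=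
  2 * n + |(l : ℝ)| + F + lam * ((l : ℝ) + F)

/-- **Equation (4.13) of the paper:** the Witten (Römelsberger) index of the free
complex weak supersymmetric model,
`I(λ) = Σ_{n,l} (e^{−βE⁰_{nl}} − 2e^{−βE¹_{nl}} + e^{−βE²_{nl}})
      = (1 − e^{−β(1+λ)})/(1 − e^{−β(1−λ)})`. -/
theorem romelsberger_index_free_complex_model (β lam : ℝ) (hβ : 0 < β)
    (hlam : |lam| < 1) :
    HasSum
      (fun p : ℕ × ℤ =>
        Real.exp (-β * Elevel lam 0 p.1 p.2)
          - 2 * Real.exp (-β * Elevel lam 1 p.1 p.2)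
          + Real.exp (-β * Elevel lam 2 p.1 p.2))
      ((1 - Real.exp (-β * (1 + lam))) / (1 - Real.exp (-β * (1 - lam)))) := by
  obtain ⟨h1, h2⟩ := abs_lt.mp hlam
  have qp := Real.exp (-β * (1 + lam))
  set qp := Real.exp (-β * (1 + lam)) with hqp
  set qm := Real.exp (-β * (1 - lam)) with hqm
  set A := Real.exp (-(2 * β)) with hA
  have hqppos : 0 < qp := Real.exp_pos _
  have hqmpos : 0 < qm := Real.exp_pos _
  have hApos : 0 < A := Real.exp_pos _
  have hqp1 : qp < 1 := by
    rw [hqp]; apply Real.exp_lt_one_iff.mpr; nlinarith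
  have hqm1 : qm < 1 := by
    rw [hqm]; apply Real.exp_lt_one_iff.mpr; nlinarith
  have hA1 : A < 1 := by
    rw [hA]; apply Real.exp_lt_one_iff.mpr; nlinarith
  have hAqq : A = qp * qm := by
    rw [hA, hqp, hqm, ← Real.exp_add]; ring_nf
  -- sum over n
  have hf : HasSum (fun n : ℕ => A ^ n) (1 / (1 - A)) := by
    simpa [one_div] using hasSum_geometric_of_lt_one hApos.le hA1
  -- sum over l
  set g : ℤ → ℝ := fun l => Real.exp (-β * (|(l : ℝ)| + lam * l)) with hg
  have hgnat : ∀ n : ℕ, g (n : ℤ) = qp ^ n := by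
    intro n
    rw [hg, hqp, ← Real.exp_nat_mul]
    push_cast
    rw [abs_of_nonneg (by positivity : (0:ℝ) ≤ (n:ℝ))]
    ring_nf
  have hgneg : ∀ n : ℕ, g (-(n + 1) : ℤ) = qm * qm ^ n := by
    intro n
    rw [hg, hqm, ← Real.exp_nat_mul, ← Real.exp_add]
    push_cast
    rw [abs_of_nonpos (by nlinarith [Nat.cast_nonneg (α := ℝ) n] : -((n:ℝ) + 1) ≤ 0)]
    ring_nf
  have hG : HasSum g (1 / (1 - qp) + qm * (1 / (1 - qm))) := by
    apply HasSum.of_nat_of_neg_add_one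
    · rw [one_div]
      exact (hasSum_geometric_of_lt_one hqppos.le hqp1).congr_fun
        hgnat
    · have := (hasSum_geometric_of_lt_one hqmpos.le hqm1).mul_left qm
      rw [one_div]
      exact this.congr_fun hgneg
  -- product
  have hsum : Summable fun p : ℕ × ℤ => A ^ p.1 * g p.2 :=
    Summable.mul_of_nonneg hf.summable hG.summable
      (fun n => by positivity) (fun l => Real.exp_nonneg _)
  have hprod := (hf.mul hG hsum).mul_left ((1 - qp) ^ 2)
  have key : ∀ (F n : ℕ) (l : ℤ),
      Real.exp (-β * Elevel lam F n l) = A ^ n * g l * qp ^ F := by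
    intro F n l
    rw [hA, hqp, hg, ← Real.exp_nat_mul, ← Real.exp_nat_mul, ← Real.exp_add,
      ← Real.exp_add]
    congr 1
    simp only [Elevel]
    ring
  convert hprod using 1
  · rfl
  · funext p
    rw [key 0, key 1, key 2]
    ring
  · rw [hAqq]
    have e1 : 1 - qp ≠ 0 := by nlinarith
    have e2 : 1 - qm ≠ 0 := by nlinarith
    have e3 : 1 - qp * qm ≠ 0 := by nlinarith
    field_simp
    ring
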